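/- arXiv:1910.11254 — 10 statements merged into one kernel-verified Lean document; each statement's English description precedes it below -/
import Mathlib

section
/- A partially ordered vector space X contains a non-empty, order-bounded, order-open set if and only if the interior of the positive cone X₊ with respect to the order topology is non-empty. -/
/-!
Order openness is preserved by translations `z ↦ z + c`, by reflections `z ↦ c - z` and by finite
intersections. Translating a bounded order open set `O ⊆ [a, b]` by `a` moves it into the positive
cone; conversely, if `x ∈ O` with `O` order open inside the cone, then intersecting `O` with its
reflection through `x` gives an order open neighbourhood of `x` contained in `[0, 2x]`.
-/

/-- A net (indexed by a preordered type) decreases to `x`: it is antitone and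
`x` is the infimum of its range. -/
def DecrTo {ι X : Type*} [Preorder ι] [Preorder X] (f : ι → X) (x : X) : Prop :=
  Antitone f ∧ IsGLB (Set.range f) x

/-- `M` is a net catching set for `x`: for every net `f ↓ 0` (with nonempty
directed index set) there is an index `α` with `[x - f α, x + f α] ⊆ M`. -/
def NetCatchingSetFor {X : Type*} [AddCommGroup X] [PartialOrder X] [IsOrderedAddMonoid X] (M : Set X) (x : X) : Prop :=
  ∀ (ι : Type) [Preorder ι], Nonempty ι → Directed (· ≤ ·) (id : ι → ι) →
    ∀ f : ι → X, DecrTo f 0 → ∃ α : ι, Set.Icc (x - f α) (x + f α) ⊆ M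

/-- `O` is order open if it is a net catching set for each of its points. -/
def OrderOpen {X : Type*} [AddCommGroup X] [PartialOrder X] [IsOrderedAddMonoid X] (O : Set X) : Prop :=
  ∀ x ∈ O, NetCatchingSetFor O x

namespace NetCatchingSetFor

variable {X : Type*} [AddCommGroup X] [PartialOrder X] [IsOrderedAddMonoid X] {M N : Set X} {x : X}

lemma preimage_add_right (c : X) (h : NetCatchingSetFor M (x + c)) :
    NetCatchingSetFor ((· + c) ⁻¹' M) x := by
  intro ι _ hne hdir f hf
  obtain ⟨α, hα⟩ := h ι hne hdir f hf
  refine ⟨α, fun z hz => hα ⟨?_, ?_⟩⟩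
  · simpa only [add_sub_right_comm] using add_le_add_left hz.1 c
  · simpa only [add_right_comm] using add_le_add_left hz.2 c

lemma preimage_sub_left (c : X) (h : NetCatchingSetFor M (c - x)) :
    NetCatchingSetFor ((c - ·) ⁻¹' M) x := by
  intro ι _ hne hdir f hf
  obtain ⟨α, hα⟩ := h ι hne hdir f hf
  refine ⟨α, fun z hz => hα ⟨?_, ?_⟩⟩
  · simpa only [sub_sub] using sub_le_sub_left hz.2 c
  · simpa only [sub_sub_eq_add_sub, add_sub_right_comm] using sub_le_sub_left hz.1 c

lemma inter (hM : NetCatchingSetFor M x) (hN : NetCatchingSetFor N x) :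
    NetCatchingSetFor (M ∩ N) x := by
  intro ι _ hne hdir f hf
  obtain ⟨α₁, hα₁⟩ := hM ι hne hdir f hf
  obtain ⟨α₂, hα₂⟩ := hN ι hne hdir f hf
  obtain ⟨α, h₁, h₂⟩ := hdir α₁ α₂
  have Icc_mono {β : ι} (hβ : β ≤ α) : Set.Icc (x - f α) (x + f α) ⊆ Set.Icc (x - f β) (x + f β) :=
    Set.Icc_subset_Icc (sub_le_sub_left (hf.1 hβ) x) (add_le_add_right (hf.1 hβ) x)
  exact ⟨α, Set.subset_inter ((Icc_mono h₁).trans hα₁) ((Icc_mono h₂).trans hα₂)⟩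

end NetCatchingSetFor

namespace OrderOpen

variable {X : Type*} [AddCommGroup X] [PartialOrder X] [IsOrderedAddMonoid X] {O P : Set X}

lemma preimage_add_right (hO : OrderOpen O) (c : X) : OrderOpen ((· + c) ⁻¹' O) :=
  fun _ hx => (hO _ hx).preimage_add_right c

lemma preimage_sub_left (hO : OrderOpen O) (c : X) : OrderOpen ((c - ·) ⁻¹' O) :=
  fun _ hx => (hO _ hx).preimage_sub_left c

lemma inter (hO : OrderOpen O) (hP : OrderOpen P) : OrderOpen (O ∩ P) :=
  fun x hx => (hO x hx.1).inter (hP x hx.2)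

end OrderOpen

theorem stmt0_general {X : Type*} [AddCommGroup X] [PartialOrder X] [IsOrderedAddMonoid X] :
    (∃ O : Set X, OrderOpen O ∧ O.Nonempty ∧ ∃ a b : X, O ⊆ Set.Icc a b) ↔
    (∃ x : X, ∃ O : Set X, OrderOpen O ∧ x ∈ O ∧ O ⊆ {z : X | 0 ≤ z}) := by
  constructor
  · rintro ⟨O, hO, ⟨x, hx⟩, a, b, hab⟩
    refine ⟨x - a, (· + a) ⁻¹' O, hO.preimage_add_right a, by simpa using hx, fun z hz => ?_⟩
    exact nonneg_of_le_add_left (hab hz).1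
  · rintro ⟨x, O, hO, hx, hpos⟩
    refine ⟨O ∩ (x + x - ·) ⁻¹' O, hO.inter (hO.preimage_sub_left _), ⟨x, hx, by simpa using hx⟩,
      0, x + x, fun z hz => ⟨hpos hz.1, sub_nonneg.mp (hpos hz.2)⟩⟩

/-- A partially ordered vector space `X` contains a non-empty, order-bounded,
order-open set if and only if the interior of the positive cone w.r.t. the
order topology is non-empty. -/
theorem stmt0 {X : Type*} [AddCommGroup X] [PartialOrder X] [IsOrderedAddMonoid X] [Module ℝ X] [PosSMulStrictMono ℝ X] :
    (∃ O : Set X, OrderOpen O ∧ O.Nonempty ∧ ∃ a b : X, O ⊆ Set.Icc a b) ↔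
    (∃ x : X, ∃ O : Set X, OrderOpen O ∧ x ∈ O ∧ O ⊆ {z : X | 0 ≤ z}) :=
  stmt0_general
end

section
/- In a partially ordered vector space X, the interior of the cone X₊ with respect to the order topology equals the set of all net catching elements of X. -/
/-- `y` is a net catching element: every net decreasing to `0` eventually
lies below `y`. -/
def NetCatchingElem {X : Type*} [Preorder X] [Zero X] (y : X) : Prop :=
  ∀ (ι : Type) [Preorder ι], Nonempty ι → Directed (· ≤ ·) (id : ι → ι) →
    ∀ f : ι → X, DecrTo f (0 : X) → ∃ α : ι, f α ≤ y

/-!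
Net catching elements are nonnegative (catch the constant net `0`), upward closed, and stable
under positive scaling, since `f ↓ 0` implies `c • f ↓ 0`. So they form an order open subset of
the cone: given `f ↓ 0`, pick `α` with `f α ≤ ½ • x`; then every point of `[x - f α, x + f α]`
lies above the net catching element `½ • x`. Conversely, if `x` lies in an order open `O ⊆ X₊`,
then `x - f α ∈ O` for some `α`, i.e. `f α ≤ x`.
-/

lemma DecrTo.orderIso {ι X Y : Type*} [Preorder ι] [Preorder X] [Preorder Y] {f : ι → X} {x : X}
    (hf : DecrTo f x) (e : X ≃o Y) : DecrTo (e ∘ f) (e x) :=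
  ⟨e.monotone.comp_antitone hf.1, by rw [Set.range_comp]; exact e.isGLB_image'.mpr hf.2⟩

lemma decrTo_const {ι X : Type*} [Preorder ι] [Preorder X] [Nonempty ι] (x : X) :
    DecrTo (fun _ : ι => x) x :=
  ⟨antitone_const, by rw [Set.range_const]; exact isGLB_singleton⟩

section NetCatchingElem

variable {X : Type*}

lemma NetCatchingElem.mono [Preorder X] [Zero X] {y z : X} (hy : NetCatchingElem y)
    (hyz : y ≤ z) : NetCatchingElem z := fun ι _ hne hdir f hf =>
  let ⟨α, hα⟩ := hy ι hne hdir f hf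
  ⟨α, hα.trans hyz⟩

lemma NetCatchingElem.nonneg [Preorder X] [Zero X] {y : X} (hy : NetCatchingElem y) : 0 ≤ y :=
  let ⟨_, h⟩ := hy Unit ⟨()⟩ (fun _ _ => ⟨(), le_rfl, le_rfl⟩) _ (decrTo_const 0)
  h

lemma NetCatchingElem.smul [AddCommMonoid X] [PartialOrder X] [Module ℝ X] [PosSMulMono ℝ X]
    {y : X} (hy : NetCatchingElem y) {c : ℝ} (hc : 0 < c) : NetCatchingElem (c • y) := by
  intro ι _ hne hdir f hf
  have hscaled : DecrTo (fun i => c⁻¹ • f i) 0 := by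
    simpa [Function.comp_def] using hf.orderIso (OrderIso.smulRight (inv_pos.mpr hc))
  obtain ⟨α, hα⟩ := hy ι hne hdir _ hscaled
  exact ⟨α, by simpa [smul_smul, hc.ne'] using smul_le_smul_of_nonneg_left hα hc.le⟩

lemma orderOpen_setOf_netCatchingElem [AddCommGroup X] [PartialOrder X] [IsOrderedAddMonoid X]
    [Module ℝ X] [PosSMulMono ℝ X] : OrderOpen {y : X | NetCatchingElem y} := by
  intro x hx ι _ hne hdir f hf
  have hhalf : NetCatchingElem ((1 / 2 : ℝ) • x) := NetCatchingElem.smul hx (by norm_num)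
  obtain ⟨α, hα⟩ := hhalf ι hne hdir f hf
  refine ⟨α, fun z hz => hhalf.mono ?_⟩
  calc (1 / 2 : ℝ) • x = x - (1 / 2 : ℝ) • x := by rw [eq_sub_iff_add_eq, ← add_smul]; norm_num
    _ ≤ x - f α := sub_le_sub_left hα x
    _ ≤ z := hz.1

lemma NetCatchingElem.of_orderOpen [AddCommGroup X] [PartialOrder X] [IsOrderedAddMonoid X]
    {O : Set X} (hO : OrderOpen O) (hpos : O ⊆ {z : X | 0 ≤ z}) {x : X} (hx : x ∈ O) : NetCatchingElem x := by
  intro ι _ hne hdir f hf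
  obtain ⟨α, hα⟩ := hO x hx ι hne hdir f hf
  have hfα : 0 ≤ f α := hf.2.1 (Set.mem_range_self α)
  have hlow : x - f α ∈ O := hα ⟨le_rfl, (sub_le_self x hfα).trans (le_add_of_nonneg_right hfα)⟩
  exact ⟨α, sub_nonneg.mp (hpos hlow)⟩

end NetCatchingElem

theorem stmt2_general {X : Type*} [AddCommGroup X] [PartialOrder X] [IsOrderedAddMonoid X] [Module ℝ X] [PosSMulStrictMono ℝ X] :
    {x : X | ∃ O : Set X, OrderOpen O ∧ x ∈ O ∧ O ⊆ {z : X | 0 ≤ z}} =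
      {y : X | NetCatchingElem y} := by
  ext x
  constructor
  · rintro ⟨O, hO, hxO, hpos⟩
    exact NetCatchingElem.of_orderOpen hO hpos hxO
  · intro hx
    exact ⟨_, orderOpen_setOf_netCatchingElem, hx, fun _ => NetCatchingElem.nonneg⟩

/-- The interior of the positive cone with respect to the order topology equals
the set of net catching elements. -/
theorem stmt2 {X : Type*} [AddCommGroup X] [PartialOrder X] [IsOrderedAddMonoid X] [Module ℝ X] [PosSMulStrictMono ℝ X] [PosSMulReflectLT ℝ X] :
    {x : X | ∃ O : Set X, OrderOpen O ∧ x ∈ O ∧ O ⊆ {z : X | 0 ≤ z}} =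
      {y : X | NetCatchingElem y} :=
  stmt2_general
end

section
/- In the space ℓ∞ of bounded real sequences with the componentwise order, the constant sequence e = (1,1,1,...) is an order unit but there are no net catching elements in ℓ∞. -/
/-- `u ∈ X₊` is an order unit. -/
def OrderUnit {X : Type*} [AddCommMonoid X] [PartialOrder X] (u : X) : Prop :=
  0 ≤ u ∧ ∀ x : X, ∃ n : ℕ, x ≤ n • u

noncomputable def tailFn (c : ℝ) (n : ℕ) : BoundedContinuousFunction ℕ ℝ :=
  ⟨⟨fun k => if k < n then 0 else c, continuous_of_discreteTopology⟩, |c|, by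
    intro x y
    change dist (if x < n then (0:ℝ) else c) (if y < n then (0:ℝ) else c) ≤ |c|
    split_ifs <;> simp [Real.dist_eq, abs_nonneg, abs_sub_comm]⟩

lemma tailFn_apply (c : ℝ) (n k : ℕ) : tailFn c n k = if k < n then 0 else c := rfl

/-- In `ℓ∞` (bounded real sequences, i.e. bounded continuous functions on the
discrete space `ℕ`, with the componentwise order) the constant sequence
`e = (1,1,1,…)` is an order unit, but there are no net catching elements. -/
theorem stmt5 :
    OrderUnit (1 : BoundedContinuousFunction ℕ ℝ) ∧
      ¬ ∃ y : BoundedContinuousFunction ℕ ℝ, NetCatchingElem y := by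
  constructor
  · refine ⟨fun n => zero_le_one, fun x => ⟨⌈‖x‖⌉₊, fun k => ?_⟩⟩
    have h := BoundedContinuousFunction.norm_coe_le_norm x k
    have h2 : ‖x‖ ≤ (⌈‖x‖⌉₊ : ℝ) := Nat.le_ceil _
    have h3 : x k ≤ ‖x‖ := (le_abs_self _).trans (by simpa using h)
    show x k ≤ ((⌈‖x‖⌉₊ : ℕ) • (1 : BoundedContinuousFunction ℕ ℝ)) k
    have h4 : ((⌈‖x‖⌉₊ : ℕ) • (1 : BoundedContinuousFunction ℕ ℝ)) k = (⌈‖x‖⌉₊ : ℝ) := by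
      simp
    rw [h4]; linarith
  · rintro ⟨y, hy⟩
    set c : ℝ := ‖y‖ + 1 with hc
    have hc0 : 0 ≤ c := by positivity
    have key := hy ℕ ⟨0⟩ (fun a b => ⟨max a b, le_max_left _ _, le_max_right _ _⟩)
      (tailFn c) ?_
    · obtain ⟨n, hn⟩ := key
      have h2 : y n ≤ ‖y‖ := (le_abs_self _).trans
        (by simpa using BoundedContinuousFunction.norm_coe_le_norm y n)
      have h3 : tailFn c n n ≤ y n := hn n
      rw [tailFn_apply] at h3
      rw [if_neg (lt_irrefl n)] at h3
      linarith
    · constructor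
      · intro a b hab k
        show tailFn c b k ≤ tailFn c a k
        rw [tailFn_apply, tailFn_apply]
        split <;> split <;> first | rfl | exact hc0 | omega | (exfalso; omega)
      · constructor
        · rintro _ ⟨n, rfl⟩ k
          show (0 : BoundedContinuousFunction ℕ ℝ) k ≤ tailFn c n k
          rw [tailFn_apply]
          simp only [BoundedContinuousFunction.coe_zero, Pi.zero_apply]
          split
          · rfl
          · exact hc0
        · intro g hg k
          have h5 : g k ≤ tailFn c (k + 1) k := hg ⟨k + 1, rfl⟩ k
          rw [tailFn_apply] at h5
          simpa using h5
end

section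
/- Let X be a partially ordered vector space, B a base of the cone X₊, and f: X → ℝ the strictly positive linear functional with B = {x ∈ X₊ : f(x) = 1}. Then B is order closed if and only if f is order continuous. -/
/-- `C` is order closed: its complement is order open. -/
def OrderClosed {X : Type*} [AddCommGroup X] [PartialOrder X] [IsOrderedAddMonoid X] (C : Set X) : Prop :=
  OrderOpen Cᶜ

/-- `B` is a base of the cone `X₊`: non-empty, convex, contained in
`X₊ \ {0}`, and every nonzero positive `x` is uniquely `λ • b`, `λ > 0`, `b ∈ B`. -/
def IsBase {X : Type*} [AddCommGroup X] [PartialOrder X] [IsOrderedAddMonoid X] [Module ℝ X] (B : Set X) : Prop :=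
  B.Nonempty ∧ Convex ℝ B ∧ B ⊆ {x : X | 0 ≤ x ∧ x ≠ 0} ∧
    ∀ x : X, 0 ≤ x → x ≠ 0 →
      ∃! p : ℝ × X, 0 < p.1 ∧ p.2 ∈ B ∧ x = p.1 • p.2

/-!
Write `B = X₊ ∩ f⁻¹{1}`. If `f` is order continuous, `f⁻¹{1}` is order closed, and so is `X₊`
(if `y + g α ≥ 0` for a net `g α ↓ 0` then `y ≥ 0`); order closed sets are closed under finite
intersections. Conversely, let `B` be order closed and `g α ↓ 0` with `f (g α) ≥ ε > 0` for all `α`.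
Then `ε⁻¹ • g α ↓ 0`, and since `0 ∉ B` some interval `[-ε⁻¹ • g α, ε⁻¹ • g α]` misses `B`; but it
contains `(f (g α))⁻¹ • g α ∈ B`. Hence `f (g α) ↓ 0`, which by monotonicity of `f` makes the
preimage of every open set order open.
-/

open Set

theorem DecrTo.orderIso_s7 {ι Y Z : Type*} [Preorder ι] [Preorder Y] [Preorder Z] {g : ι → Y} {y : Y}
    (hg : DecrTo g y) (e : Y ≃o Z) : DecrTo (fun i => e (g i)) (e y) :=
  ⟨e.monotone.comp_antitone hg.1, range_comp e g ▸ e.isGLB_image'.2 hg.2⟩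

section OrderTopology

variable {X : Type*} [AddCommGroup X] [PartialOrder X] [IsOrderedAddMonoid X]

theorem NetCatchingSetFor.mono {M N : Set X} {x : X} (h : NetCatchingSetFor M x) (hMN : M ⊆ N) :
    NetCatchingSetFor N x := by
  intro ι _ hne hdir g hg
  obtain ⟨α, hα⟩ := h ι hne hdir g hg
  exact ⟨α, hα.trans hMN⟩

theorem OrderOpen.union {O O' : Set X} (h : OrderOpen O) (h' : OrderOpen O') :
    OrderOpen (O ∪ O') := by
  rintro x (hx | hx)
  · exact (h x hx).mono subset_union_left
  · exact (h' x hx).mono subset_union_right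

theorem OrderClosed.inter {C D : Set X} (hC : OrderClosed C) (hD : OrderClosed D) :
    OrderClosed (C ∩ D) := by
  rw [OrderClosed, compl_inter]
  exact hC.union hD

theorem orderClosed_setOf_nonneg : OrderClosed {x : X | 0 ≤ x} := by
  intro y hy ι _ hne hdir g hg
  by_contra! hmeets
  have hglb : IsGLB (range fun α => y + g α) y := by
    simpa using (hg.orderIso_s7 (OrderIso.addLeft y)).2
  refine hy (hglb.2 ?_)
  rintro _ ⟨α, rfl⟩
  obtain ⟨z, hz, hz_nonneg⟩ := not_subset.1 (hmeets α)
  exact (not_not.1 hz_nonneg : 0 ≤ z).trans hz.2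

theorem orderClosed_preimage {f : X → ℝ} (hf : ∀ U : Set ℝ, IsOpen U → OrderOpen (f ⁻¹' U))
    {C : Set ℝ} (hC : IsClosed C) : OrderClosed (f ⁻¹' C) :=
  hf _ hC.isOpen_compl

/-- For positive `f` this says that `g α ↓ 0` implies `f (g α) ↓ 0`. -/
def IsOrderContinuousAtZero (f : X → ℝ) : Prop :=
  ∀ (ι : Type) [Preorder ι], Nonempty ι → Directed (· ≤ ·) (id : ι → ι) →
    ∀ g : ι → X, DecrTo g 0 → ∀ ε > 0, ∃ α, f (g α) < ε

theorem orderOpen_preimage_of_isOrderContinuousAtZero {f : X →+ ℝ} (hmono : Monotone f)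
    (hf : IsOrderContinuousAtZero f) {U : Set ℝ} (hU : IsOpen U) : OrderOpen (f ⁻¹' U) := by
  intro x hx ι _ hne hdir g hg
  obtain ⟨ε, hε, hball⟩ := Metric.isOpen_iff.1 hU (f x) hx
  obtain ⟨α, hα⟩ := hf ι hne hdir g hg ε hε
  refine ⟨α, fun z hz => hball ?_⟩
  have hlower := hmono hz.1
  have hupper := hmono hz.2
  rw [map_sub] at hlower
  rw [map_add] at hupper
  rw [Metric.mem_ball, Real.dist_eq, abs_lt]
  constructor <;> linarith

end OrderTopology

theorem isOrderContinuousAtZero_of_orderClosed {X : Type*} [AddCommGroup X] [PartialOrder X]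
    [IsOrderedAddMonoid X] [Module ℝ X] [PosSMulMono ℝ X] {f : X →ₗ[ℝ] ℝ}
    (hB : OrderClosed {x : X | 0 ≤ x ∧ f x = 1}) :
    IsOrderContinuousAtZero f := by
  intro ι _ hne hdir g hg ε hε
  by_contra! hge
  have hscaled : DecrTo (fun α => ε⁻¹ • g α) 0 := by
    simpa using hg.orderIso_s7 (OrderIso.smulRight (inv_pos.2 hε))
  obtain ⟨α, hα⟩ := hB 0 (by simp) ι hne hdir _ hscaled
  have hgα : 0 ≤ g α := hg.2.1 ⟨α, rfl⟩
  have hfgα : 0 < f (g α) := hε.trans_le (hge α)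
  have hb_nonneg : 0 ≤ (f (g α))⁻¹ • g α := smul_nonneg (inv_nonneg.2 hfgα.le) hgα
  have hb_le : (f (g α))⁻¹ • g α ≤ ε⁻¹ • g α :=
    smul_le_smul_of_nonneg_right (inv_anti₀ hε (hge α)) hgα
  refine hα ⟨?_, by simpa using hb_le⟩ ⟨hb_nonneg, ?_⟩
  · rw [zero_sub]
    exact (neg_nonpos.2 (hb_nonneg.trans hb_le)).trans hb_nonneg
  · rw [map_smul, smul_eq_mul, inv_mul_cancel₀ hfgα.ne']

theorem stmt7_general {X : Type*} [AddCommGroup X] [PartialOrder X] [IsOrderedAddMonoid X] [Module ℝ X] [PosSMulStrictMono ℝ X]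
    (B : Set X) (f : X →ₗ[ℝ] ℝ)
    (hf : ∀ x : X, 0 < x → 0 < f x)
    (hBf : B = {x : X | 0 ≤ x ∧ f x = 1}) :
    OrderClosed B ↔ ∀ U : Set ℝ, IsOpen U → OrderOpen (f ⁻¹' U) := by
  subst hBf
  have hpos : ∀ x : X, 0 ≤ x → 0 ≤ f x := fun x hx =>
    hx.eq_or_lt.elim (fun h => h ▸ f.map_zero.ge) fun h => (hf x h).le
  have hmono : Monotone f := (PositiveLinearMap.mk₀ f hpos).monotone'
  constructor
  · intro hB U hU
    exact orderOpen_preimage_of_isOrderContinuousAtZero (f := f.toAddMonoidHom) hmono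
      (isOrderContinuousAtZero_of_orderClosed hB) hU
  · intro hcont
    exact orderClosed_setOf_nonneg.inter (orderClosed_preimage hcont isClosed_singleton)

/-- Given the base `B = {x ∈ X₊ : f x = 1}` for a strictly positive linear
functional `f`, `B` is order closed iff `f` is order continuous (continuous
from the order topology into `ℝ`). -/
theorem stmt7 {X : Type*} [AddCommGroup X] [PartialOrder X] [IsOrderedAddMonoid X] [Module ℝ X] [PosSMulStrictMono ℝ X]
    (B : Set X) (f : X →ₗ[ℝ] ℝ)
    (hf : ∀ x : X, 0 < x → 0 < f x)
    (hB : IsBase B) (hBf : B = {x : X | 0 ≤ x ∧ f x = 1}) :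
    OrderClosed B ↔ ∀ U : Set ℝ, IsOpen U → OrderOpen (f ⁻¹' U) :=
  stmt7_general B f hf hBf
end

section
/- Let X be a partially ordered vector space and B an order closed base of X₊. Then for every net (x_α) in X with x_α ↓ 0 there exist b ∈ B and an index α such that x_α ≤ b; consequently every upper bound of B is a net catching element. -/
/-- Writing `x = c • b` with `b ∈ B`, the element `b` would lie in `[-x, x]` if `c > 1`. -/
theorem IsBase.exists_mem_ge_of_Icc_subset_compl {X : Type*} [AddCommGroup X] [PartialOrder X]
    [IsOrderedAddMonoid X] [Module ℝ X] [SMulPosMono ℝ X] {B : Set X} (hB : IsBase B)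
    {x : X} (hx : 0 ≤ x) (hIcc : Set.Icc (-x) x ⊆ Bᶜ) : ∃ b ∈ B, x ≤ b := by
  obtain ⟨⟨b₀, hb₀⟩, -, hpos, hrepr⟩ := hB
  rcases eq_or_ne x 0 with rfl | hx0
  · exact ⟨b₀, hb₀, (hpos hb₀).1⟩
  obtain ⟨⟨c, b⟩, ⟨-, hb, rfl⟩, -⟩ := hrepr x hx hx0
  have hb0 : 0 ≤ b := (hpos hb).1
  have hc1 : c ≤ 1 := by
    by_contra! hc1
    have hb_le : b ≤ c • b := le_smul_of_one_le_left hb0 hc1.le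
    exact hIcc ⟨(neg_nonpos.mpr hx).trans hb0, hb_le⟩ hb
  exact ⟨b, hb, smul_le_of_le_one_left hb0 hc1⟩

theorem IsBase.exists_mem_le_of_orderClosed {X : Type*} [AddCommGroup X] [PartialOrder X]
    [IsOrderedAddMonoid X] [Module ℝ X] [SMulPosMono ℝ X] {B : Set X} (hB : IsBase B)
    (hcl : OrderClosed B) (ι : Type) [Preorder ι] (hne : Nonempty ι)
    (hdir : Directed (· ≤ ·) (id : ι → ι)) (f : ι → X) (hf : DecrTo f 0) :
    ∃ b ∈ B, ∃ α : ι, f α ≤ b := by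
  have h0 : (0 : X) ∈ Bᶜ := fun h => (hB.2.2.1 h).2 rfl
  obtain ⟨α, hα⟩ := hcl 0 h0 ι hne hdir f hf
  rw [zero_sub, zero_add] at hα
  obtain ⟨b, hb, hle⟩ := hB.exists_mem_ge_of_Icc_subset_compl (hf.2.1 ⟨α, rfl⟩) hα
  exact ⟨b, hb, α, hle⟩

theorem stmt9_general {X : Type*} [AddCommGroup X] [PartialOrder X] [IsOrderedAddMonoid X] [Module ℝ X] [PosSMulStrictMono ℝ X]
    (B : Set X) (hB : IsBase B) (hcl : OrderClosed B) :
    (∀ (ι : Type) [Preorder ι], Nonempty ι → Directed (· ≤ ·) (id : ι → ι) →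
      ∀ f : ι → X, DecrTo f (0 : X) → ∃ b ∈ B, ∃ α : ι, f α ≤ b) ∧
    (∀ u : X, (∀ b ∈ B, b ≤ u) → NetCatchingElem u) := by
  refine ⟨fun ι _ => hB.exists_mem_le_of_orderClosed hcl ι, fun u hu ι _ hne hdir f hf => ?_⟩
  obtain ⟨b, hb, α, hle⟩ := hB.exists_mem_le_of_orderClosed hcl ι hne hdir f hf
  exact ⟨α, hle.trans (hu b hb)⟩

/-- If `B` is an order closed base of `X₊`, then every net decreasing to `0`
eventually lies below some element of `B`; consequently every upper bound of
`B` is net catching. -/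
theorem stmt9 {X : Type*} [AddCommGroup X] [PartialOrder X] [IsOrderedAddMonoid X] [Module ℝ X] [PosSMulStrictMono ℝ X] [PosSMulReflectLT ℝ X]
    (B : Set X) (hB : IsBase B) (hcl : OrderClosed B) :
    (∀ (ι : Type) [Preorder ι], Nonempty ι → Directed (· ≤ ·) (id : ι → ι) →
      ∀ f : ι → X, DecrTo f (0 : X) → ∃ b ∈ B, ∃ α : ι, f α ≤ b) ∧
    (∀ u : X, (∀ b ∈ B, b ≤ u) → NetCatchingElem u) :=
  stmt9_general B hB hcl
end

section
/- Every nontrivial finite-dimensional Archimedean partially ordered vector space has net catching elements. -/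
/-!
The positive cone spans a subspace `V`, in which it is a convex generating set and hence has an
interior point `u`. Using `u`, the Archimedean property makes the cone closed in `V`. A closed
pointed cone in finite dimension has compact order intervals, so a net decreasing to `0` converges
to `0`: its cluster points are lower bounds of the net, hence `0`. The net therefore eventually
enters the neighbourhood `u - V₊` of `0`, i.e. it eventually lies below `u`.
-/

open Set Filter Topology

instance CompactIccSpace.infConvergenceClass {α : Type*} [TopologicalSpace α] [PartialOrder α]
    [ClosedIicTopology α] [CompactIccSpace α] : InfConvergenceClass α where
  tendsto_coe_atBot_isGLB a s ha := by
    rcases s.eq_empty_or_nonempty with rfl | ⟨x₀, hx₀⟩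
    · exact tendsto_of_isEmpty
    have hle (x : s) : ∀ᶠ y : s in atBot, (y : α) ≤ x := eventually_le_atBot x
    refine (isCompact_Icc : IsCompact (Icc a x₀)).le_nhds_of_unique_clusterPt ?_
      fun z hz hzc => ?_
    · exact (hle ⟨x₀, hx₀⟩).mono fun y hy => ⟨ha.1 y.2, hy⟩
    · refine le_antisymm (ha.2 fun x hx => ?_) hz.1
      exact isClosed_Iic.closure_subset (hzc.mem_closure_of_mem (Iic x) (hle ⟨x, hx⟩))

section TopologicalOrderedGroup

variable {E : Type*} [TopologicalSpace E] [AddCommGroup E] [IsTopologicalAddGroup E]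
  [PartialOrder E] [IsOrderedAddMonoid E]

theorem isClosed_Ici_zero_of_mem_interior {u : E} (hu : u ∈ interior (Ici 0))
    (harch : ∀ x y : E, (∀ n : ℕ, n • x ≤ y) → x ≤ 0) : IsClosed (Ici (0 : E)) := by
  refine closure_subset_iff_isClosed.mp fun y hy => ?_
  suffices ∀ n : ℕ, n • (-y) ≤ u from neg_nonpos.mp (harch _ _ this)
  intro n
  have hnhds : (fun y' => u + n • (y - y')) ⁻¹' Ici 0 ∈ 𝓝 y := by
    have hcont : Continuous fun y' => u + n • (y - y') := by fun_prop
    refine hcont.continuousAt.preimage_mem_nhds ?_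
    simpa only [sub_self, smul_zero, add_zero] using mem_interior_iff_mem_nhds.mp hu
  -- `u + n • y` splits as `(u + n • (y - y')) + n • y'` with `y'` positive and close to `y`
  obtain ⟨y', hy'u, hy'⟩ := mem_closure_iff_nhds.mp hy _ hnhds
  calc n • -y = -(n • y) := smul_neg _ _
    _ ≤ u := neg_le_iff_add_nonneg.mpr ?_
  calc (0 : E) ≤ u + n • (y - y') + n • y' := add_nonneg hy'u (nsmul_nonneg hy' n)
    _ = u + n • y := by rw [smul_sub]; abel

theorem orderClosedTopology_of_isClosed_Ici_zero (h : IsClosed (Ici (0 : E))) :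
    OrderClosedTopology E where
  isClosed_le' := by
    convert h.preimage (continuous_snd.sub continuous_fst : Continuous fun p : E × E => p.2 - p.1)
    ext p
    exact sub_nonneg.symm

theorem netCatchingElem_of_mem_interior [InfConvergenceClass E] {u : E}
    (hu : u ∈ interior (Ici 0)) : NetCatchingElem u := by
  intro ι _ _ hdir f ⟨hanti, hglb⟩
  have : IsDirectedOrder ι := ⟨hdir⟩
  have hle : ∀ᶠ x in 𝓝 (0 : E), x ≤ u := by
    have hcont : Continuous fun x : E => u - x := by fun_prop
    have hu' : Ici 0 ∈ 𝓝 (u - 0) := by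
      simpa only [sub_zero] using mem_interior_iff_mem_nhds.mp hu
    exact mem_of_superset (hcont.tendsto 0 hu') fun x hx => sub_nonneg.mp hx
  exact ((tendsto_atTop_isGLB hanti hglb).eventually hle).exists

end TopologicalOrderedGroup

section FiniteDimensional

variable {E : Type*} [NormedAddCommGroup E] [NormedSpace ℝ E] [FiniteDimensional ℝ E]
  [PartialOrder E] [IsOrderedAddMonoid E] [PosSMulMono ℝ E]

theorem FiniteDimensional.isBounded_Icc [ClosedIciTopology E] (a b : E) :
    Bornology.IsBounded (Icc a b) := by
  by_contra hunb
  simp only [isBounded_iff_forall_norm_le, not_exists, not_forall, not_le] at hunb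
  choose d hd hdn using fun k : ℕ => hunb k
  have hpos (k : ℕ) : 0 < ‖d k‖ := (Nat.cast_nonneg k).trans_lt (hdn k)
  have hsphere (k : ℕ) : ‖d k‖⁻¹ • d k ∈ Metric.sphere (0 : E) 1 := by
    simp [norm_smul, (hpos k).ne']
  obtain ⟨w, hw, ψ, hψ, hlim⟩ := (isCompact_sphere (0 : E) 1).tendsto_subseq hsphere
  have hr : Tendsto (fun j => ‖d (ψ j)‖⁻¹) atTop (𝓝 0) :=
    tendsto_inv_atTop_zero.comp <| tendsto_atTop_mono (fun j => (hdn (ψ j)).le)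
      (tendsto_natCast_atTop_atTop.comp hψ.tendsto_atTop)
  have hlow : Tendsto (fun j => ‖d (ψ j)‖⁻¹ • (d (ψ j) - a)) atTop (𝓝 w) := by
    simpa [smul_sub] using hlim.sub (hr.smul_const a)
  have hup : Tendsto (fun j => ‖d (ψ j)‖⁻¹ • (b - d (ψ j))) atTop (𝓝 (-w)) := by
    simpa [smul_sub] using (hr.smul_const b).sub hlim
  have hw_nonneg : 0 ≤ w := ge_of_tendsto' hlow fun j =>
    smul_nonneg (inv_nonneg.mpr (norm_nonneg _)) (sub_nonneg.mpr (hd _).1)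
  have hw_nonpos : 0 ≤ -w := ge_of_tendsto' hup fun j =>
    smul_nonneg (inv_nonneg.mpr (norm_nonneg _)) (sub_nonneg.mpr (hd _).2)
  simp [le_antisymm (neg_nonneg.mp hw_nonpos) hw_nonneg] at hw

instance FiniteDimensional.compactIccSpace [OrderClosedTopology E] : CompactIccSpace E where
  isCompact_Icc {a b} := Metric.isCompact_of_isClosed_isBounded isClosed_Icc (isBounded_Icc a b)

theorem nonempty_interior_Ici_zero (h : Submodule.span ℝ (Ici (0 : E)) = ⊤) :
    (interior (Ici (0 : E))).Nonempty := by
  refine (convex_Ici 0).interior_nonempty_iff_affineSpan_eq_top.mpr (SetLike.coe_injective ?_)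
  rw [← insert_eq_of_mem (self_mem_Ici (a := (0 : E))), affineSpan_insert_zero, h]
  rfl

end FiniteDimensional

theorem netCatchingElem_coe {X : Type*} [AddMonoid X] [Preorder X] {S : AddSubmonoid X}
    (hS : Ici 0 ⊆ (S : Set X)) {y : S} (hy : NetCatchingElem y) : NetCatchingElem (y : X) := by
  intro ι _ hne hdir f ⟨hanti, hglb⟩
  have hf (α : ι) : f α ∈ S := hS (hglb.1 ⟨α, rfl⟩)
  refine hy ι hne hdir (fun α => ⟨f α, hf α⟩) ⟨fun _ _ h => hanti h, ?_, ?_⟩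
  · rintro _ ⟨α, rfl⟩
    exact hglb.1 ⟨α, rfl⟩
  · intro v hv
    exact hglb.2 (by rintro _ ⟨α, rfl⟩; exact hv ⟨α, rfl⟩)

theorem stmt10_general {X : Type*} [AddCommGroup X] [PartialOrder X] [IsOrderedAddMonoid X] [Module ℝ X] [PosSMulStrictMono ℝ X]
    [FiniteDimensional ℝ X]
    (harch : ∀ x y : X, (∀ n : ℕ, n • x ≤ y) → x ≤ 0) :
    ∃ y : X, NetCatchingElem y := by
  set V := Submodule.span ℝ (Ici (0 : X))
  -- any norm on `V` will do, since all norms on a finite-dimensional space are equivalent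
  let e := (Module.finBasis ℝ V).equivFun
  let _ : NormedAddCommGroup V := NormedAddCommGroup.induced V _ e.toLinearMap e.injective
  let _ : NormedSpace ℝ V := NormedSpace.induced ℝ V _ e.toLinearMap
  have : PosSMulMono ℝ V := PosSMulMono.lift ((↑) : V → X) Iff.rfl fun _ _ => rfl
  obtain ⟨u, hu⟩ := nonempty_interior_Ici_zero (E := V) Submodule.span_span_coe_preimage
  have := orderClosedTopology_of_isClosed_Ici_zero
    (isClosed_Ici_zero_of_mem_interior hu fun x y h => harch x y h)
  exact ⟨u, netCatchingElem_coe (S := V.toAddSubmonoid) Submodule.subset_span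
    (netCatchingElem_of_mem_interior (E := V) hu)⟩

/-- Every nontrivial finite-dimensional Archimedean partially ordered vector
space has net catching elements. -/
theorem stmt10 {X : Type*} [AddCommGroup X] [PartialOrder X] [IsOrderedAddMonoid X] [Module ℝ X] [PosSMulStrictMono ℝ X] [PosSMulReflectLT ℝ X]
    [FiniteDimensional ℝ X]
    (harch : ∀ x y : X, (∀ n : ℕ, n • x ≤ y) → x ≤ 0)
    (hnontriv : ∃ x : X, 0 < x) :
    ∃ y : X, NetCatchingElem y :=
  stmt10_general harch
end

section
/- Let (X, ‖·‖) be a normed space with ice cream cone K_{f,ε}. For each norm-interior point x of K_{f,ε} there exists λ > 0 such that b ≤ λx (in the order induced by K_{f,ε}) for every b in the base B_{f,ε}. -/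
/-- The ice cream cone with axis `f` and parameter `ε`. -/
def iceCreamCone {X : Type*} [NormedAddCommGroup X] [NormedSpace ℝ X]
    (f : X →L[ℝ] ℝ) (ε : ℝ) : Set X :=
  {x : X | ε * ‖x‖ ≤ f x}

/-- For each norm-interior point `x` of the ice cream cone `K_{f,ε}` there is
`λ > 0` with `b ≤ λ • x` (in the cone order, i.e. `λ • x - b ∈ K_{f,ε}`) for
every `b` in the base `B_{f,ε} = {z ∈ K_{f,ε} : f z = 1}`. -/
theorem stmt12 {X : Type*} [NormedAddCommGroup X] [NormedSpace ℝ X]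
    (f : X →L[ℝ] ℝ) (hf : ‖f‖ = 1) (ε : ℝ) (hε : ε ∈ Set.Ioo (0 : ℝ) 1)
    (x : X) (hx : x ∈ interior (iceCreamCone f ε)) :
    ∃ lam : ℝ, 0 < lam ∧
      ∀ b : X, b ∈ iceCreamCone f ε → f b = 1 →
        lam • x - b ∈ iceCreamCone f ε := by
  have hε0 : 0 < ε := hε.1
  obtain ⟨δ, hδ, hball⟩ := Metric.mem_nhds_iff.mp (mem_interior_iff_mem_nhds.mp hx)
  obtain ⟨u, hu1, hu2⟩ := f.exists_lt_apply_of_lt_opNorm (r := ε) (by rw [hf]; exact hε.2)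
  -- pick v with ‖v‖ < 1 and f v < -ε
  set v : X := if f u < 0 then u else -u with hv
  have hv1 : ‖v‖ < 1 := by
    rw [hv]; split <;> simpa
  have hv2 : f v < -ε := by
    rw [Real.norm_eq_abs] at hu2
    rw [hv]; split
    · rw [abs_of_neg ‹f u < 0›] at hu2; linarith
    · push_neg at *
      rw [abs_of_nonneg ‹0 ≤ f u›] at hu2
      rw [map_neg]; linarith
  -- the point x + (δ/2) • v is in the cone
  have hmem : x + (δ/2) • v ∈ iceCreamCone f ε := by
    apply hball
    rw [Metric.mem_ball, dist_eq_norm]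
    simp only [add_sub_cancel_left, norm_smul, Real.norm_eq_abs,
      abs_of_pos (by positivity : (0:ℝ) < δ/2)]
    nlinarith
  have hcone : ε * ‖x + (δ/2) • v‖ ≤ f (x + (δ/2) • v) := hmem
  have hkey : 0 < f x - ε * ‖x‖ := by
    have h1 : ‖x‖ - (δ/2) * ‖v‖ ≤ ‖x + (δ/2) • v‖ := by
      have h := norm_add_le (x + (δ/2) • v) (-((δ/2) • v))
      simp only [add_neg_cancel_right, norm_neg, norm_smul, Real.norm_eq_abs,
        abs_of_pos (by positivity : (0:ℝ) < δ/2)] at h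
      linarith
    have h2 : f (x + (δ/2) • v) = f x + (δ/2) * f v := by
      simp [map_add, map_smul]
    have h3 : ε * (‖x‖ - (δ/2) * ‖v‖) ≤ ε * ‖x + (δ/2) • v‖ :=
      mul_le_mul_of_nonneg_left h1 hε.1.le
    have h4 : (δ/2) * f v < (δ/2) * (-ε) :=
      mul_lt_mul_of_pos_left hv2 (by positivity)
    have h5 : (ε * (δ/2)) * ‖v‖ < (ε * (δ/2)) * 1 :=
      mul_lt_mul_of_pos_left hv1 (by positivity)
    nlinarith
  set c := f x - ε * ‖x‖ with hc
  have hcpos : 0 < c := hkey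
  refine ⟨2 / c, div_pos two_pos hcpos, fun b hb hfb => ?_⟩
  have hbn : ε * ‖b‖ ≤ 1 := by rw [← hfb]; exact hb
  have hlc : (2 / c) * c = 2 := by field_simp
  have hnorm : ‖(2 / c) • x - b‖ ≤ (2 / c) * ‖x‖ + ‖b‖ := by
    calc ‖(2 / c) • x - b‖ ≤ ‖(2 / c) • x‖ + ‖b‖ := norm_sub_le _ _
      _ = (2 / c) * ‖x‖ + ‖b‖ := by
          rw [norm_smul, Real.norm_eq_abs, abs_of_pos (div_pos two_pos hcpos)]
  show ε * ‖(2 / c) • x - b‖ ≤ f ((2 / c) • x - b)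
  have hfval : f ((2 / c) • x - b) = (2 / c) * f x - 1 := by
    simp [map_sub, map_smul, hfb]
  rw [hfval]
  have h3 : ε * ‖(2 / c) • x - b‖ ≤ ε * ((2 / c) * ‖x‖ + ‖b‖) :=
    mul_le_mul_of_nonneg_left hnorm hε.1.le
  have h4 : ε * ((2 / c) * ‖x‖ + ‖b‖) ≤ (2 / c) * (ε * ‖x‖) + 1 := by nlinarith [hε.1]
  have h5 : (2 / c) * (ε * ‖x‖) + 1 ≤ (2 / c) * f x - 1 := by nlinarith
  linarith
end

section
/- Let X be a reflexive Banach space ordered by an ice cream cone K_{f,ε}. Then every norm-interior point of K_{f,ε} is a net catching element of X. -/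
/-- The order induced by a cone `K`: `u ≤ v` iff `v - u ∈ K`. -/
def coneLe {X : Type*} [AddCommGroup X] (K : Set X) (u v : X) : Prop :=
  v - u ∈ K

/-- A net decreases to `x` in the order induced by `K`: it is decreasing and
`x` is its infimum. -/
def coneDecrTo {X : Type*} [AddCommGroup X] (K : Set X) {ι : Type} [Preorder ι]
    (g : ι → X) (x : X) : Prop :=
  (∀ a b : ι, a ≤ b → coneLe K (g b) (g a)) ∧
  (∀ α : ι, coneLe K x (g α)) ∧
  (∀ z : X, (∀ α : ι, coneLe K z (g α)) → coneLe K z x)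

/-- `y` is a net catching element for the order induced by `K`. -/
def coneNetCatching {X : Type*} [AddCommGroup X] (K : Set X) (y : X) : Prop :=
  ∀ (ι : Type) [Preorder ι], Nonempty ι → Directed (· ≤ ·) (id : ι → ι) →
    ∀ g : ι → X, coneDecrTo K g (0 : X) → ∃ α : ι, coneLe K (g α) y

open Filter Topology

/-- In a reflexive Banach space ordered by an ice cream cone `K_{f,ε}`, every
norm-interior point of `K_{f,ε}` is a net catching element. -/
theorem stmt13 {X : Type*} [NormedAddCommGroup X] [NormedSpace ℝ X] [CompleteSpace X]
    (hrefl : Function.Surjective ⇑(NormedSpace.inclusionInDoubleDual ℝ X))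
    (f : X →L[ℝ] ℝ) (hf : ‖f‖ = 1) (ε : ℝ) (hε : ε ∈ Set.Ioo (0 : ℝ) 1)
    (x : X) (hx : x ∈ interior (iceCreamCone f ε)) :
    coneNetCatching (iceCreamCone f ε) x := by
  intro ι _ hne hdir g hg
  obtain ⟨hdec, hlb, hinf⟩ := hg
  haveI := hne
  haveI : IsDirected ι (· ≤ ·) := ⟨fun a b => hdir a b⟩
  haveI : (atTop : Filter ι).NeBot := atTop_neBot
  have hε0 : (0 : ℝ) < ε := hε.1
  set K := iceCreamCone f ε with hK
  have hmem : ∀ u : X, u ∈ K ↔ ε * ‖u‖ ≤ f u := fun u => Iff.rfl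
  have hmemK : ∀ α, g α ∈ K := by
    intro α
    have := hlb α
    simpa [coneLe, sub_zero] using this
  have hfnn : ∀ α, 0 ≤ f (g α) := fun α =>
    le_trans (by positivity) ((hmem _).1 (hmemK α))
  -- antitone bound
  have hdiff : ∀ a b : ι, a ≤ b → ε * ‖g a - g b‖ ≤ f (g a) - f (g b) := by
    intro a b hab
    have h := hdec a b hab
    have h2 := (hmem _).1 h
    simpa [map_sub] using h2
  have hanti : ∀ a b : ι, a ≤ b → f (g b) ≤ f (g a) := by
    intro a b hab
    have := hdiff a b hab
    nlinarith [norm_nonneg (g a - g b)]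
  -- infimum of values
  set S : Set ℝ := Set.range (fun α => f (g α)) with hS
  have hSne : S.Nonempty := Set.range_nonempty _
  have hSbdd : BddBelow S := ⟨0, by rintro s ⟨α, rfl⟩; exact hfnn α⟩
  set c : ℝ := sInf S with hc
  have hcle : ∀ α, c ≤ f (g α) := fun α => csInf_le hSbdd ⟨α, rfl⟩
  -- Cauchy
  have hnorm_small : ∀ δ : ℝ, 0 < δ → ∃ α0, ∀ a, α0 ≤ a → ‖g α0 - g a‖ ≤ δ := by
    intro δ hδ
    have : sInf S < c + ε * δ := by nlinarith
    obtain ⟨s, ⟨α0, rfl⟩, hs⟩ := exists_lt_of_csInf_lt hSne this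
    refine ⟨α0, fun a ha => ?_⟩
    have h1 := hdiff α0 a ha
    have h2 := hcle a
    have h3 : ε * ‖g α0 - g a‖ < ε * δ := by simp only at hs; linarith
    exact le_of_lt ((mul_lt_mul_iff_right₀ hε0).1 h3)
  have hcauchy : Cauchy (map g atTop) := by
    rw [Metric.cauchy_iff]
    refine ⟨map_neBot, fun t ht => ?_⟩
    obtain ⟨α0, hα0⟩ := hnorm_small (t / 3) (by positivity)
    refine ⟨g '' Set.Ici α0, image_mem_map (Ici_mem_atTop α0), ?_⟩
    rintro _ ⟨a, ha, rfl⟩ _ ⟨b, hb, rfl⟩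
    have h1 := hα0 a ha
    have h2 := hα0 b hb
    have h3 : dist (g a) (g b) ≤ ‖g α0 - g a‖ + ‖g α0 - g b‖ := by
      rw [dist_eq_norm]
      calc ‖g a - g b‖ = ‖-(g α0 - g a) + (g α0 - g b)‖ := by congr 1; abel
        _ ≤ ‖-(g α0 - g a)‖ + ‖g α0 - g b‖ := norm_add_le _ _
        _ = ‖g α0 - g a‖ + ‖g α0 - g b‖ := by rw [norm_neg]
    linarith
  obtain ⟨w, hw⟩ := CompleteSpace.complete hcauchy
  have hwt : Tendsto g atTop (𝓝 w) := hw
  -- K is closed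
  have hKclosed : IsClosed K := by
    have : K = {u : X | ε * ‖u‖ ≤ f u} := rfl
    rw [this]
    exact isClosed_le (by fun_prop) f.continuous
  -- w ∈ K
  have hwK : w ∈ K := hKclosed.mem_of_tendsto hwt (Eventually.of_forall hmemK)
  -- w is a lower bound
  have hwlb : ∀ β, coneLe K w (g β) := by
    intro β
    have htend : Tendsto (fun α => g β - g α) atTop (𝓝 (g β - w)) :=
      tendsto_const_nhds.sub hwt
    have hev : ∀ᶠ α in atTop, g β - g α ∈ K := by
      filter_upwards [Ici_mem_atTop β] with α hα
      exact hdec β α hα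
    exact hKclosed.mem_of_tendsto htend hev
  have hw0 : coneLe K w 0 := hinf w hwlb
  have hwK' : -w ∈ K := by simpa [coneLe] using hw0
  have hwzero : w = 0 := by
    have h1 := (hmem _).1 hwK
    have h2 := (hmem _).1 hwK'
    rw [norm_neg, map_neg] at h2
    have : ‖w‖ = 0 := by nlinarith [norm_nonneg w]
    simpa using this
  rw [hwzero] at hwt
  -- interior point catches
  obtain ⟨r, hr, hball⟩ := Metric.isOpen_iff.1 isOpen_interior x hx
  have hball' : Metric.ball x r ⊆ K := hball.trans interior_subset
  have hev : ∀ᶠ α in atTop, ‖g α‖ < r := by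
    have := Metric.tendsto_nhds.1 hwt r hr
    simpa [dist_eq_norm] using this
  obtain ⟨α, hα⟩ := hev.exists
  refine ⟨α, ?_⟩
  show x - g α ∈ K
  apply hball'
  rw [Metric.mem_ball, dist_eq_norm]
  simpa using hα
end

section
/- Let X be an Archimedean partially ordered vector space containing an order unit. Then the set U of all order units of X is downward directed and inf U = 0. -/
namespace OrderUnit

variable {X : Type*} [AddCommGroup X] [PartialOrder X] [IsOrderedAddMonoid X]

theorem smul {𝕜 : Type*} [Field 𝕜] [LinearOrder 𝕜] [IsStrictOrderedRing 𝕜] [Archimedean 𝕜]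
    [Module 𝕜 X] [PosSMulMono 𝕜 X]
    {u : X} (hu : OrderUnit u) {c : 𝕜} (hc : 0 < c) : OrderUnit (c • u) := by
  refine ⟨smul_nonneg hc.le hu.1, fun x => ?_⟩
  obtain ⟨n, hn⟩ := hu.2 x
  obtain ⟨m, hm⟩ := exists_nat_ge ((n : 𝕜) / c)
  refine ⟨m, hn.trans ?_⟩
  rw [← Nat.cast_smul_eq_nsmul 𝕜, ← Nat.cast_smul_eq_nsmul 𝕜 m, smul_smul]
  exact smul_le_smul_of_nonneg_right ((div_le_iff₀ hc).mp hm) hu.1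

theorem directedOn_ge (𝕜 : Type*) [Field 𝕜] [LinearOrder 𝕜] [IsStrictOrderedRing 𝕜]
    [Archimedean 𝕜] [Module 𝕜 X] [PosSMulMono 𝕜 X] :
    DirectedOn (· ≥ ·) {u : X | OrderUnit u} := by
  intro u hu v hv
  obtain ⟨n, hn⟩ := hv.2 u
  have hpos : (0 : 𝕜) < n + 1 := by positivity
  refine ⟨((n : 𝕜) + 1)⁻¹ • u, hu.smul (inv_pos.mpr hpos), ?_, ?_⟩
  · exact smul_le_of_le_one_left hu.1 (inv_le_one_of_one_le₀ (by simp))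
  · show ((n : 𝕜) + 1)⁻¹ • u ≤ v
    rw [inv_smul_le_iff_of_pos hpos, add_smul, one_smul, Nat.cast_smul_eq_nsmul]
    exact hn.trans (le_add_of_nonneg_right hv.1)

theorem isGLB_zero (𝕜 : Type*) [Field 𝕜] [LinearOrder 𝕜] [IsStrictOrderedRing 𝕜]
    [Archimedean 𝕜] [Module 𝕜 X] [PosSMulMono 𝕜 X]
    (harch : ∀ x y : X, (∀ n : ℕ, n • x ≤ y) → x ≤ 0) {e : X} (he : OrderUnit e) :
    IsGLB {u : X | OrderUnit u} 0 := by
  refine ⟨fun u hu => hu.1, fun b hb => harch b e fun n => ?_⟩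
  rcases n.eq_zero_or_pos with rfl | hn
  · simpa using he.1
  · have hpos : (0 : 𝕜) < n := by exact_mod_cast hn
    rw [← Nat.cast_smul_eq_nsmul 𝕜, ← le_inv_smul_iff_of_pos hpos]
    exact hb (he.smul (inv_pos.mpr hpos))

end OrderUnit

theorem stmt17_general {X : Type*} [AddCommGroup X] [PartialOrder X] [IsOrderedAddMonoid X]
    [Module ℝ X] [PosSMulStrictMono ℝ X]
    (harch : ∀ x y : X, (∀ n : ℕ, n • x ≤ y) → x ≤ 0)
    (hex : ∃ u : X, OrderUnit u) :
    DirectedOn (· ≥ ·) {u : X | OrderUnit u} ∧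
      IsGLB {u : X | OrderUnit u} 0 := by
  obtain ⟨u, hu⟩ := hex
  exact ⟨OrderUnit.directedOn_ge ℝ, OrderUnit.isGLB_zero ℝ harch hu⟩

/-- In an Archimedean partially ordered vector space containing an order unit,
the set of all order units is downward directed with infimum `0`. -/
theorem stmt17 {X : Type*} [AddCommGroup X] [PartialOrder X] [IsOrderedAddMonoid X]
    [Module ℝ X] [PosSMulStrictMono ℝ X] [PosSMulReflectLT ℝ X]
    (harch : ∀ x y : X, (∀ n : ℕ, n • x ≤ y) → x ≤ 0)
    (hex : ∃ u : X, OrderUnit u) :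
    DirectedOn (· ≥ ·) {u : X | OrderUnit u} ∧
      IsGLB {u : X | OrderUnit u} 0 :=
  stmt17_general harch hex
end

section
/- Let X be an Archimedean and directed partially ordered vector space and V ⊆ X a circled net catching set for 0. Then V absorbs all order intervals: for all x ≤ y in X there exists λ₀ > 0 such that λ[x,y] ⊆ V for all λ ∈ [-λ₀, λ₀]. -/
/-- `V` is a net catching set for `0`: for every net `f ↓ 0` there is `α`
with `[-f α, f α] ⊆ V`. -/
def NetCatchingSetForZero {X : Type*} [AddCommGroup X] [PartialOrder X] [IsOrderedAddMonoid X] (V : Set X) : Prop :=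
  ∀ (ι : Type) [Preorder ι], Nonempty ι → Directed (· ≤ ·) (id : ι → ι) →
    ∀ f : ι → X, DecrTo f (0 : X) → ∃ α : ι, Set.Icc (-(f α)) (f α) ⊆ V

/-- `M` is circled. -/
def Circled {X : Type*} [AddCommGroup X] [Module ℝ X] (M : Set X) : Prop :=
  ∀ c : ℝ, c ∈ Set.Icc (-1 : ℝ) 1 → ∀ m ∈ M, c • m ∈ M

/-!
Enclose `[x, y]` in a symmetric interval `[-u, u]` with `0 ≤ u` (directedness). By the
Archimedean property the sequence `u / (n + 1)` decreases to `0`, so the net catching set `V`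
contains `[-u / (α + 1), u / (α + 1)] ⊇ (α + 1)⁻¹ • [x, y]` for some `α`; since `V` is circled,
every multiple `c • [x, y]` with `|c| ≤ (α + 1)⁻¹` then lies in `V` as well.
-/

lemma exists_nonneg_Icc_subset_Icc_neg {X : Type*} [AddCommGroup X] [PartialOrder X]
    [IsOrderedAddMonoid X] [IsDirected X (· ≤ ·)] (x y : X) :
    ∃ u : X, 0 ≤ u ∧ Set.Icc x y ⊆ Set.Icc (-u) u := by
  obtain ⟨v, hyv, hxv⟩ := exists_ge_ge y (-x)
  obtain ⟨u, hvu, hu⟩ := exists_ge_ge v 0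
  refine ⟨u, hu, Set.Icc_subset_Icc ?_ (hyv.trans hvu)⟩
  exact neg_le.mp (hxv.trans hvu)

lemma decrTo_zero_inv_succ_smul {X : Type*} [AddCommGroup X] [PartialOrder X]
    [IsOrderedAddMonoid X] [Module ℝ X] [PosSMulMono ℝ X]
    (harch : ∀ x y : X, (∀ n : ℕ, n • x ≤ y) → x ≤ 0)
    {u : X} (hu : 0 ≤ u) : DecrTo (fun n : ℕ => ((n : ℝ) + 1)⁻¹ • u) 0 := by
  refine ⟨fun m n hmn => smul_le_smul_of_nonneg_right (by gcongr) hu, ?_, ?_⟩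
  · rintro _ ⟨n, rfl⟩
    exact smul_nonneg (by positivity) hu
  · intro b hb
    -- `b ≤ u / (n + 1)` for all `n` gives `n • b ≤ u - b`
    refine harch b (u - b) fun n => ?_
    have hbn : ((n : ℝ) + 1) • b ≤ ((n : ℝ) + 1) • ((n : ℝ) + 1)⁻¹ • u :=
      smul_le_smul_of_nonneg_left (hb ⟨n, rfl⟩) (by positivity)
    rw [smul_smul, mul_inv_cancel₀ (by positivity), one_smul, add_smul, one_smul,
      Nat.cast_smul_eq_nsmul] at hbn
    exact le_sub_iff_add_le.mpr hbn

lemma Circled.smul_mem_of_abs_le {X : Type*} [AddCommGroup X] [Module ℝ X] {V : Set X}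
    (hV : Circled V) {t c : ℝ} (ht : 0 < t) {z : X} (hz : t • z ∈ V) (hc : |c| ≤ t) : c • z ∈ V := by
  have hct : c / t ∈ Set.Icc (-1 : ℝ) 1 := by
    rw [Set.mem_Icc, ← abs_le, abs_div, abs_of_pos ht, div_le_one ht]
    exact hc
  simpa only [smul_smul, div_mul_cancel₀ c ht.ne'] using hV _ hct _ hz

lemma NetCatchingSetForZero.exists_Icc_subset_of_decrTo {X : Type*} [AddCommGroup X]
    [PartialOrder X] [IsOrderedAddMonoid X] {V : Set X} (hV : NetCatchingSetForZero V)
    {f : ℕ → X} (hf : DecrTo f 0) : ∃ n, Set.Icc (-f n) (f n) ⊆ V :=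
  hV ℕ ⟨0⟩ (directed_of (· ≤ ·)) f hf

theorem stmt19_general {X : Type*} [AddCommGroup X] [PartialOrder X] [IsOrderedAddMonoid X] [Module ℝ X]
    [PosSMulStrictMono ℝ X]
    (hdir : ∀ x y : X, ∃ z : X, x ≤ z ∧ y ≤ z)
    (harch : ∀ x y : X, (∀ n : ℕ, n • x ≤ y) → x ≤ 0)
    (V : Set X) (hcirc : Circled V) (hnc : NetCatchingSetForZero V) :
    ∀ x y : X, x ≤ y → ∃ lam₀ : ℝ, 0 < lam₀ ∧
      ∀ c : ℝ, |c| ≤ lam₀ → ∀ z ∈ Set.Icc x y, c • z ∈ V := by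
  intro x y _
  have : IsDirected X (· ≤ ·) := ⟨hdir⟩
  obtain ⟨u, hu, hxyu⟩ := exists_nonneg_Icc_subset_Icc_neg x y
  obtain ⟨α, hα⟩ := hnc.exists_Icc_subset_of_decrTo (decrTo_zero_inv_succ_smul harch hu)
  set t : ℝ := ((α : ℝ) + 1)⁻¹
  have ht : 0 < t := by positivity
  refine ⟨t, ht, fun c hc z hz => hcirc.smul_mem_of_abs_le ht (hα ?_) hc⟩
  obtain ⟨hlo, hhi⟩ := hxyu hz
  exact ⟨by simpa only [smul_neg] using smul_le_smul_of_nonneg_left hlo ht.le,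
    smul_le_smul_of_nonneg_left hhi ht.le⟩

/-- In an Archimedean directed partially ordered vector space, every circled
net catching set for `0` absorbs all order intervals. -/
theorem stmt19 {X : Type*} [AddCommGroup X] [PartialOrder X] [IsOrderedAddMonoid X] [Module ℝ X]
    [PosSMulStrictMono ℝ X] [PosSMulReflectLT ℝ X]
    (hdir : ∀ x y : X, ∃ z : X, x ≤ z ∧ y ≤ z)
    (harch : ∀ x y : X, (∀ n : ℕ, n • x ≤ y) → x ≤ 0)
    (V : Set X) (hcirc : Circled V) (hnc : NetCatchingSetForZero V) :
    ∀ x y : X, x ≤ y → ∃ lam₀ : ℝ, 0 < lam₀ ∧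
      ∀ c : ℝ, |c| ≤ lam₀ → ∀ z ∈ Set.Icc x y, c • z ∈ V :=
  stmt19_general hdir harch V hcirc hnc
end
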